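/- Let p ∈ [1, ∞), let (f(n))_{n≥0} be a deterministic real sequence, and let (ζ(n))_{n≥0} be a sequence of mutually independent real Gaussian random variables with mean zero (variances arbitrary, possibly zero). If ∑_{n=0}^∞ |f(n) + ζ(n)|^p < ∞ almost surely, then ∑_{n=0}^∞ |f(n)|^p < ∞ and ∑_{n=0}^∞ (E[ζ(n)²])^{p/2} < ∞. -/

import Mathlib

/-!
Truncate: `Z n = min (|f n + ζ n| ^ p) 1` are independent, `[0, 1]`-valued and almost surely
summable. Since `E[exp (-∑ Z n)] = ∏ E[exp (-Z n)] ≤ exp (-c ∑ E[Z n])` with `c = 1 - e⁻¹` and the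
left side is positive, `∑ E[Z n] < ∞`. By the symmetry of the Gaussian law, `E[Z n]` dominates
`min (|f n| ^ p) 1 / 2` and a fixed multiple of `min (v n ^ (p / 2)) 1`, and a summable sequence
eventually stays below `1`, so the truncation can be dropped.
-/

open MeasureTheory ProbabilityTheory Filter Finset Real
open scoped Topology NNReal

lemma summable_of_summable_min_one {a : ℕ → ℝ} (h : Summable fun n => min (a n) 1) :
    Summable a := by
  refine h.congr_atTop ?_
  filter_upwards [h.tendsto_atTop_zero.eventually (gt_mem_nhds one_pos)] with n hn
  exact min_eq_left (min_lt_iff.1 hn |>.resolve_right (lt_irrefl 1)).le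

namespace Real

lemma exp_neg_le_one_sub_mul {x : ℝ} (h0 : 0 ≤ x) (h1 : x ≤ 1) :
    exp (-x) ≤ 1 - (1 - exp (-1)) * x := by
  have := convexOn_exp.2 (Set.mem_univ (-1)) (Set.mem_univ 0) h0 (sub_nonneg.2 h1) (by ring)
  simp only [smul_eq_mul, mul_neg, mul_one, mul_zero, add_zero, exp_zero] at this
  linarith

end Real

namespace ProbabilityTheory

variable {Ω : Type*} [MeasurableSpace Ω] {P : Measure Ω}

lemma iIndepFun.integral_finset_prod_eq_prod_integral {ι : Type*} {X : ι → Ω → ℝ}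
    (hX : iIndepFun X P) (hmeas : ∀ i, AEStronglyMeasurable (X i) P) (s : Finset ι) :
    ∫ ω, ∏ i ∈ s, X i ω ∂P = ∏ i ∈ s, ∫ ω, X i ω ∂P := by
  have := (hX.precomp (g := ((↑) : s → ι)) Subtype.val_injective)
    |>.integral_fun_prod_eq_prod_integral fun i => hmeas i
  rwa [prod_coe_sort s (fun i => ∫ ω, X i ω ∂P), integral_congr_ae
    (.of_forall fun ω => prod_coe_sort s (fun i => X i ω))] at this

lemma integral_exp_neg_le [IsProbabilityMeasure P] {X : Ω → ℝ} (hX : AEStronglyMeasurable X P)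
    (h0 : ∀ ω, 0 ≤ X ω) (h1 : ∀ ω, X ω ≤ 1) :
    ∫ ω, exp (-X ω) ∂P ≤ exp (-((1 - exp (-1)) * ∫ ω, X ω ∂P)) := by
  have hXint : Integrable X P :=
    .of_bound hX 1 (.of_forall fun ω => by rw [norm_of_nonneg (h0 ω)]; exact h1 ω)
  have hexp : Integrable (fun ω => exp (-X ω)) P :=
    .of_bound (continuous_exp.comp_aestronglyMeasurable hX.neg) 1 (.of_forall fun ω => by
      rw [norm_of_nonneg (exp_pos _).le, exp_le_one_iff, neg_nonpos]; exact h0 ω)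
  calc ∫ ω, exp (-X ω) ∂P ≤ ∫ ω, 1 - (1 - exp (-1)) * X ω ∂P :=
        integral_mono hexp ((integrable_const 1).sub (hXint.const_mul _))
          fun ω => exp_neg_le_one_sub_mul (h0 ω) (h1 ω)
    _ = 1 - (1 - exp (-1)) * ∫ ω, X ω ∂P := by
        rw [integral_sub (integrable_const 1) (hXint.const_mul _), integral_const_mul]; simp
    _ ≤ exp (-((1 - exp (-1)) * ∫ ω, X ω ∂P)) := by
        linarith [add_one_le_exp (-((1 - exp (-1)) * ∫ ω, X ω ∂P))]

lemma iIndepFun.integral_exp_neg_sum_le [IsProbabilityMeasure P] {ι : Type*} {Z : ι → Ω → ℝ}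
    (hindep : iIndepFun Z P) (hmeas : ∀ i, Measurable (Z i)) (h0 : ∀ i ω, 0 ≤ Z i ω)
    (h1 : ∀ i ω, Z i ω ≤ 1) (s : Finset ι) :
    ∫ ω, exp (-∑ i ∈ s, Z i ω) ∂P ≤ exp (-((1 - exp (-1)) * ∑ i ∈ s, ∫ ω, Z i ω ∂P)) := by
  have hexp : iIndepFun (fun i ω => exp (-Z i ω)) P :=
    hindep.comp (fun _ x => exp (-x)) fun _ => by fun_prop
  calc ∫ ω, exp (-∑ i ∈ s, Z i ω) ∂P = ∫ ω, ∏ i ∈ s, exp (-Z i ω) ∂P := by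
        simp only [← sum_neg_distrib, exp_sum]
    _ = ∏ i ∈ s, ∫ ω, exp (-Z i ω) ∂P :=
        hexp.integral_finset_prod_eq_prod_integral (fun i => by fun_prop) s
    _ ≤ ∏ i ∈ s, exp (-((1 - exp (-1)) * ∫ ω, Z i ω ∂P)) :=
        prod_le_prod (fun i _ => integral_nonneg fun ω => (exp_pos _).le)
          fun i _ => integral_exp_neg_le (hmeas i).aestronglyMeasurable (h0 i) (h1 i)
    _ = exp (-((1 - exp (-1)) * ∑ i ∈ s, ∫ ω, Z i ω ∂P)) := by
        rw [mul_sum, ← sum_neg_distrib, exp_sum]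

/-- Converse of Kolmogorov's three-series theorem for `[0, 1]`-valued variables. -/
theorem summable_integral_of_iIndepFun_of_ae_summable [IsProbabilityMeasure P] {Z : ℕ → Ω → ℝ}
    (hmeas : ∀ n, Measurable (Z n)) (h0 : ∀ n ω, 0 ≤ Z n ω) (h1 : ∀ n ω, Z n ω ≤ 1)
    (hindep : iIndepFun Z P) (hsum : ∀ᵐ ω ∂P, Summable fun n => Z n ω) :
    Summable fun n => ∫ ω, Z n ω ∂P := by
  by_contra hdiv
  have hexp_le_one : ∀ s : Finset ℕ, ∀ ω, ‖exp (-∑ n ∈ s, Z n ω)‖ ≤ 1 := fun s ω => by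
    rw [norm_of_nonneg (exp_pos _).le, exp_le_one_iff, neg_nonpos]
    exact sum_nonneg fun n _ => h0 n ω
  have hlim : Tendsto (fun N => ∫ ω, exp (-∑ n ∈ range N, Z n ω) ∂P) atTop
      (𝓝 (∫ ω, exp (-∑' n, Z n ω) ∂P)) := by
    refine tendsto_integral_of_dominated_convergence (fun _ => 1) (fun N => by fun_prop)
      (integrable_const 1) (fun N => .of_forall (hexp_le_one _)) ?_
    filter_upwards [hsum] with ω hω
    exact ((continuous_exp.comp continuous_neg).tendsto _).comp hω.hasSum.tendsto_sum_nat
  have hzero : Tendsto (fun N => ∫ ω, exp (-∑ n ∈ range N, Z n ω) ∂P) atTop (𝓝 0) := by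
    have hc : 0 < 1 - exp (-1) := sub_pos.2 (exp_lt_one_iff.2 (by norm_num))
    have hdiv' : Tendsto (fun N => ∑ n ∈ range N, ∫ ω, Z n ω ∂P) atTop atTop :=
      (not_summable_iff_tendsto_nat_atTop_of_nonneg fun n => integral_nonneg (h0 n)).1 hdiv
    refine squeeze_zero (fun N => integral_nonneg fun ω => (exp_pos _).le)
      (fun N => hindep.integral_exp_neg_sum_le hmeas h0 h1 (range N)) ?_
    exact tendsto_exp_atBot.comp <| tendsto_neg_atTop_atBot.comp <| hdiv'.const_mul_atTop hc
  have hpos : 0 < ∫ ω, exp (-∑' n, Z n ω) ∂P :=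
    integral_exp_pos (.of_bound (by fun_prop) 1 (.of_forall fun ω => by
      rw [norm_of_nonneg (exp_pos _).le, exp_le_one_iff, neg_nonpos]
      exact tsum_nonneg (h0 · ω)))
  exact hpos.ne' (tendsto_nhds_unique hlim hzero)

instance gaussianReal_isNegInvariant (v : ℝ≥0) : (gaussianReal 0 v).IsNegInvariant :=
  ⟨(gaussianReal_map_neg (μ := 0) (v := v)).trans (by rw [neg_zero])⟩

section Symmetric

variable {μ : Measure ℝ} [IsProbabilityMeasure μ] [μ.IsNegInvariant]

lemma one_half_le_measureReal_Ici_zero : 1 / 2 ≤ μ.real (Set.Ici 0) := by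
  have hsymm : μ.real (Set.Iic 0) = μ.real (Set.Ici 0) := by
    simp only [measureReal_def, ← μ.measure_neg (Set.Ici 0), Set.neg_Ici, neg_zero]
  have := measureReal_union_le (μ := μ) (Set.Iic 0) (Set.Ici 0)
  rw [Set.Iic_union_Ici, probReal_univ] at this
  linarith

lemma min_rpow_mul_measureReal_Ici_le_integral {p b c : ℝ} (t : ℝ) (hp : 0 ≤ p) (hc0 : 0 ≤ c)
    (hc : c ≤ |t| + b) :
    min (c ^ p) 1 * μ.real (Set.Ici b) ≤ ∫ x, min (|t + x| ^ p) 1 ∂μ := by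
  wlog ht : 0 ≤ t generalizing t
  · have := this (-t) (by rwa [abs_neg]) (by linarith)
    rw [← integral_neg_eq_self] at this
    simpa only [← neg_add, abs_neg] using this
  have hint : Integrable (fun x => min (|t + x| ^ p) 1) μ :=
    .of_bound (by fun_prop) 1 (.of_forall fun x => by
      rw [norm_of_nonneg (by positivity)]; exact min_le_right _ _)
  calc min (c ^ p) 1 * μ.real (Set.Ici b)
      = ∫ x, (Set.Ici b).indicator (fun _ => min (c ^ p) 1) x ∂μ := by
        rw [integral_indicator_const _ measurableSet_Ici, smul_eq_mul, mul_comm]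
    _ ≤ ∫ x, min (|t + x| ^ p) 1 ∂μ := by
        refine integral_mono ((integrable_const _).indicator measurableSet_Ici) hint fun x => ?_
        by_cases hx : x ∈ Set.Ici b
        · rw [Set.indicator_of_mem hx]
          have : c ≤ |t + x| := by
            rw [abs_of_nonneg ht] at hc
            exact hc.trans ((add_le_add_right hx t).trans (le_abs_self _))
          gcongr
        · rw [Set.indicator_of_notMem hx]
          positivity

lemma min_rpow_abs_le_two_mul_integral {p : ℝ} (hp : 0 ≤ p) (t : ℝ) :
    min (|t| ^ p) 1 ≤ 2 * ∫ x, min (|t + x| ^ p) 1 ∂μ := by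
  have := min_rpow_mul_measureReal_Ici_le_integral (μ := μ) (b := 0) t hp (abs_nonneg t) (by simp)
  have := mul_le_mul_of_nonneg_left (one_half_le_measureReal_Ici_zero (μ := μ))
    (le_min (by positivity) zero_le_one : 0 ≤ min (|t| ^ p) 1)
  linarith

end Symmetric

lemma measureReal_Ici_one_le_gaussianReal (v : ℝ≥0) :
    (gaussianReal 0 1).real (Set.Ici 1) ≤ (gaussianReal 0 v).real (Set.Ici √v) := by
  have hmap : (gaussianReal 0 1).map (√v * ·) = gaussianReal 0 v := by
    rw [gaussianReal_map_const_mul]; congr 1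
    · simp
    · ext; simp
  rw [← hmap, map_measureReal_apply (by fun_prop) measurableSet_Ici]
  exact measureReal_mono fun x (hx : 1 ≤ x) => show √v ≤ √v * x from
    le_mul_of_one_le_right (sqrt_nonneg _) hx

lemma measureReal_Ici_one_gaussianReal_pos : 0 < (gaussianReal 0 1).real (Set.Ici 1) := by
  refine ENNReal.toReal_pos (fun h => ?_) (measure_ne_top _ _)
  have := gaussianReal_absolutelyContinuous' 0 one_ne_zero h
  simp at this

lemma min_rpow_mul_measureReal_Ici_one_le_integral_gaussianReal {p : ℝ} (hp : 0 ≤ p)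
    (v : ℝ≥0) (t : ℝ) :
    min ((v : ℝ) ^ (p / 2)) 1 * (gaussianReal 0 1).real (Set.Ici 1)
      ≤ ∫ x, min (|t + x| ^ p) 1 ∂gaussianReal 0 v := by
  have hsqrt : (v : ℝ) ^ (p / 2) = √v ^ p := by
    rw [sqrt_eq_rpow, ← rpow_mul (NNReal.coe_nonneg v), one_div_mul_eq_div]
  rw [hsqrt]
  calc _ ≤ min (√v ^ p) 1 * (gaussianReal 0 v).real (Set.Ici √v) := by
        gcongr
        exact measureReal_Ici_one_le_gaussianReal v
    _ ≤ _ := min_rpow_mul_measureReal_Ici_le_integral t hp (sqrt_nonneg _) (by simp)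

lemma integral_sq_gaussianReal (v : ℝ≥0) : ∫ x, x ^ 2 ∂gaussianReal 0 v = v := by
  simpa [variance_eq_integral aemeasurable_id'] using variance_fun_id_gaussianReal (μ := 0) (v := v)

end ProbabilityTheory

/-- If `(ζ(n))_{n ≥ 0}` is a sequence of mutually independent mean-zero real Gaussian random
variables (with arbitrary, possibly zero, variances) and
`∑ₙ |f(n) + ζ(n)|^p < ∞` almost surely for some `p ∈ [1, ∞)`, then
`∑ₙ |f(n)|^p < ∞` and `∑ₙ (E[ζ(n)²])^{p/2} < ∞`. -/
theorem summable_of_summable_add_gaussian {Ω : Type*} [MeasurableSpace Ω]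
    (P : Measure Ω) [IsProbabilityMeasure P] (p : ℝ) (hp : 1 ≤ p)
    (f : ℕ → ℝ) (ζ : ℕ → Ω → ℝ) (hζmeas : ∀ n, Measurable (ζ n))
    (hindep : iIndepFun ζ P)
    (v : ℕ → NNReal)
    (hgauss : ∀ n, Measure.map (ζ n) P = gaussianReal 0 (v n))
    (hsum : ∀ᵐ ω ∂P, Summable fun n => |f n + ζ n ω| ^ p) :
    (Summable fun n => |f n| ^ p) ∧
      (Summable fun n => (∫ ω, (ζ n ω) ^ 2 ∂P) ^ (p / 2)) := by
  have hp0 : 0 ≤ p := by linarith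
  have hmin_nonneg : ∀ x : ℝ, 0 ≤ min (|x| ^ p) 1 := fun x => by positivity
  have hE : Summable fun n => ∫ x, min (|f n + x| ^ p) 1 ∂gaussianReal 0 (v n) := by
    have := summable_integral_of_iIndepFun_of_ae_summable (P := P)
      (Z := fun n ω => min (|f n + ζ n ω| ^ p) 1) (fun n => by fun_prop)
      (fun n ω => hmin_nonneg _) (fun n ω => min_le_right _ _)
      (hindep.comp (fun n x => min (|f n + x| ^ p) 1) fun n => by fun_prop)
      (hsum.mono fun ω hω => hω.of_nonneg_of_le (fun n => hmin_nonneg _) fun n => min_le_left _ _)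
    convert this using 2 with n
    rw [← hgauss n, integral_map (hζmeas n).aemeasurable (by fun_prop)]
  have hsq : ∀ n, ∫ ω, ζ n ω ^ 2 ∂P = v n := fun n => by
    rw [← integral_sq_gaussianReal, ← hgauss n,
      integral_map (hζmeas n).aemeasurable (by fun_prop)]
  refine ⟨summable_of_summable_min_one ?_, ?_⟩
  · exact (hE.mul_left 2).of_nonneg_of_le (fun n => hmin_nonneg _)
      fun n => min_rpow_abs_le_two_mul_integral hp0 (f n)
  · simp_rw [hsq]
    refine summable_of_summable_min_one <|
      (hE.div_const ((gaussianReal 0 1).real (Set.Ici 1))).of_nonneg_of_le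
        (fun n => le_min (by positivity) zero_le_one) fun n => ?_
    rw [le_div_iff₀ measureReal_Ici_one_gaussianReal_pos]
    exact min_rpow_mul_measureReal_Ici_one_le_integral_gaussianReal hp0 (v n) (f n)
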